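/- arXiv:0712.3288 — 7 statements merged into one kernel-verified Lean document; each statement's English description precedes it below -/
import Mathlib

section
/- The function e(v,u) := (n/2)·λ_max(v⊗v − u), defined on ℝⁿ × S₀ⁿ (symmetric traceless n×n matrices), is convex. -/
/-!
For symmetric `A` one has `λ_max A ≤ t` iff `A ≤ t • 1` in the Loewner order, so `λ_max` is
monotone and convex there. The map `(v, u) ↦ v ⊗ v - u` is Loewner-convex, because for
`a + b = 1` the defect `a • x ⊗ x + b • y ⊗ y - (a • x + b • y) ⊗ (a • x + b • y)` equals
`(a * b) • (x - y) ⊗ (x - y) ≥ 0`. Composing the two gives the convexity of `e`.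
-/

open Matrix

/-- The largest eigenvalue of a (Hermitian/symmetric) matrix. -/
noncomputable def lambdaMax {n : ℕ} (w : Matrix (Fin n) (Fin n) ℝ) : ℝ :=
  if h : w.IsHermitian then ⨆ i, h.eigenvalues i else 0

/-- `e(v,u) = (n/2) λ_max (v ⊗ v - u)`. -/
noncomputable def eFun {n : ℕ} (v : EuclideanSpace ℝ (Fin n))
    (u : Matrix (Fin n) (Fin n) ℝ) : ℝ :=
  (n / 2 : ℝ) * lambdaMax (vecMulVec (fun i => v i) (fun i => v i) - u)

open scoped MatrixOrder

namespace Matrix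

variable {ι : Type*} {n : ℕ}

theorem smul_vecMulVec_add_smul_vecMulVec_sub {a b : ℝ} (hab : a + b = 1) (x y : ι → ℝ) :
    a • vecMulVec x x + b • vecMulVec y y - vecMulVec (a • x + b • y) (a • x + b • y) =
      (a * b) • vecMulVec (x - y) (x - y) := by
  obtain rfl : b = 1 - a := by linarith
  ext i j
  simp only [Matrix.sub_apply, Matrix.add_apply, Matrix.smul_apply, vecMulVec_apply,
    Pi.add_apply, Pi.sub_apply, Pi.smul_apply, smul_eq_mul]
  ring

theorem convexOn_vecMulVec_self [Fintype ι] :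
    ConvexOn ℝ Set.univ fun x : ι → ℝ => vecMulVec x x := by
  refine ⟨convex_univ, fun x _ y _ a b ha hb hab => ?_⟩
  rw [le_iff, smul_vecMulVec_add_smul_vecMulVec_sub hab]
  simpa using (posSemidef_vecMulVec_self_star (x - y)).smul (mul_nonneg ha hb)

theorem convex_isSymm_trace_eq_zero [Fintype ι] :
    Convex ℝ {u : Matrix ι ι ℝ | u.IsSymm ∧ u.trace = 0} :=
  fun _ hu _ hw a b _ _ _ =>
    ⟨(hu.1.smul a).add (hw.1.smul b), by simp [trace_add, trace_smul, hu.2, hw.2]⟩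

theorem convex_isHermitian : Convex ℝ {A : Matrix ι ι ℝ | A.IsHermitian} :=
  fun _ hA _ hB a b _ _ _ => (hA.smul (.all a)).add (hB.smul (.all b))

theorem IsHermitian.lambdaMax_le_iff [Nonempty (Fin n)] {A : Matrix (Fin n) (Fin n) ℝ}
    (hA : A.IsHermitian) {t : ℝ} : lambdaMax A ≤ t ↔ A ≤ algebraMap ℝ _ t := by
  rw [lambdaMax, dif_pos hA, le_algebraMap_iff_spectrum_le hA,
    hA.spectrum_real_eq_range_eigenvalues, Set.forall_mem_range,
    ciSup_le_iff (Set.finite_range _).bddAbove]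

theorem lambdaMax_of_isEmpty [IsEmpty (Fin n)] (A : Matrix (Fin n) (Fin n) ℝ) :
    lambdaMax A = 0 := by
  unfold lambdaMax
  split_ifs <;> simp

theorem lambdaMax_monotoneOn :
    MonotoneOn lambdaMax {A : Matrix (Fin n) (Fin n) ℝ | A.IsHermitian} := by
  intro A hA B hB hAB
  rcases isEmpty_or_nonempty (Fin n) with _ | _
  · simp [lambdaMax_of_isEmpty]
  · exact hA.lambdaMax_le_iff.2 (hAB.trans (hB.lambdaMax_le_iff.1 le_rfl))

theorem lambdaMax_convexOn :
    ConvexOn ℝ {A : Matrix (Fin n) (Fin n) ℝ | A.IsHermitian} lambdaMax := by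
  refine ⟨convex_isHermitian, fun A hA B hB a b ha hb hab => ?_⟩
  rcases isEmpty_or_nonempty (Fin n) with _ | _
  · simp [lambdaMax_of_isEmpty]
  rw [IsHermitian.lambdaMax_le_iff (convex_isHermitian hA hB ha hb hab), smul_eq_mul,
    smul_eq_mul, map_add, map_mul, map_mul, ← Algebra.smul_def, ← Algebra.smul_def]
  exact add_le_add (smul_le_smul_of_nonneg_left (hA.lambdaMax_le_iff.1 le_rfl) ha)
    (smul_le_smul_of_nonneg_left (hB.lambdaMax_le_iff.1 le_rfl) hb)

theorem _root_.ConvexOn.lambdaMax_comp {E : Type*} [AddCommMonoid E] [SMul ℝ E] {s : Set E}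
    {f : E → Matrix (Fin n) (Fin n) ℝ} (hf : ConvexOn ℝ s f)
    (hherm : ∀ x ∈ s, (f x).IsHermitian) : ConvexOn ℝ s fun x => lambdaMax (f x) :=
  ⟨hf.1, fun x hx y hy _ _ ha hb hab =>
    (lambdaMax_monotoneOn (hherm _ (hf.1 hx hy ha hb hab))
      (convex_isHermitian (hherm x hx) (hherm y hy) ha hb hab) (hf.2 hx hy ha hb hab)).trans
    (lambdaMax_convexOn.2 (hherm x hx) (hherm y hy) ha hb hab)⟩

end Matrix

theorem eFun_convexOn_general (n : ℕ) :
    ConvexOn ℝ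
      {p : EuclideanSpace ℝ (Fin n) × Matrix (Fin n) (Fin n) ℝ |
        p.2.IsSymm ∧ p.2.trace = 0}
      (fun p => eFun p.1 p.2) := by
  set S := {p : EuclideanSpace ℝ (Fin n) × Matrix (Fin n) (Fin n) ℝ |
    p.2.IsSymm ∧ p.2.trace = 0}
  have hS : Convex ℝ S := convex_isSymm_trace_eq_zero.linear_preimage (LinearMap.snd ℝ _ _)
  have hf : ConvexOn ℝ S fun p => vecMulVec (fun i => p.1 i) (fun i => p.1 i) - p.2 :=
    ((convexOn_vecMulVec_self.comp_linearMap
      ((WithLp.linearEquiv 2 ℝ (Fin n → ℝ)).toLinearMap ∘ₗ LinearMap.fst ℝ _ _)).subset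
        (fun _ _ => trivial) hS).sub ((LinearMap.snd ℝ _ _).concaveOn hS)
  have hherm : ∀ p ∈ S, (vecMulVec (fun i => p.1 i) (fun i => p.1 i) - p.2).IsHermitian :=
    fun _ hp => isHermitian_iff_isSymm.2 (IsSymm.sub (transpose_vecMulVec _ _) hp.1)
  simpa only [eFun, smul_eq_mul] using
    (hf.lambdaMax_comp hherm).smul (by positivity : (0 : ℝ) ≤ n / 2)

/-- `e` is convex on ℝⁿ × S₀ⁿ. -/
theorem eFun_convexOn (n : ℕ) (hn : 2 ≤ n) :
    ConvexOn ℝ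
      {p : EuclideanSpace ℝ (Fin n) × Matrix (Fin n) (Fin n) ℝ |
        p.2.IsSymm ∧ p.2.trace = 0}
      (fun p => eFun p.1 p.2) :=
  eFun_convexOn_general n
end

section
/- For all (v,u) ∈ ℝⁿ × S₀ⁿ one has (1/2)|v|² ≤ e(v,u), with equality if and only if u = v⊗v − (|v|²/n)·Iₙ. -/
open Matrix

/-!
The matrix `w = v⊗v − u` is symmetric with trace `|v|²`, since `u` is traceless. The trace of a
symmetric matrix is the sum of its `n` eigenvalues, hence at most `n · λ_max(w)`, with equality
exactly when all eigenvalues equal `λ_max(w)`, i.e. when `w` is the scalar matrix `(tr w / n) · Iₙ`.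
-/

section iSup

variable {ι : Type*} [Fintype ι]

theorem Real.sum_le_card_mul_iSup (f : ι → ℝ) : ∑ i, f i ≤ Fintype.card ι * ⨆ i, f i := by
  calc ∑ i, f i ≤ ∑ _i : ι, ⨆ j, f j :=
        Finset.sum_le_sum fun i _ => le_ciSup (Finite.bddAbove_range f) i
    _ = Fintype.card ι * ⨆ i, f i := by simp

theorem Real.sum_eq_card_mul_iSup_iff (f : ι → ℝ) :
    ∑ i, f i = Fintype.card ι * ⨆ i, f i ↔ ∀ i, f i = ⨆ j, f j := by
  have hgap : ∑ i, ((⨆ j, f j) - f i) = Fintype.card ι * (⨆ j, f j) - ∑ i, f i := by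
    simp [Finset.sum_sub_distrib]
  have hgap_nonneg : ∀ i ∈ Finset.univ, 0 ≤ (⨆ j, f j) - f i := fun i _ =>
    sub_nonneg.2 (le_ciSup (Finite.bddAbove_range f) i)
  rw [eq_comm, ← sub_eq_zero, ← hgap, Finset.sum_eq_zero_iff_of_nonneg hgap_nonneg]
  simp only [Finset.mem_univ, true_implies, sub_eq_zero, eq_comm]

theorem Real.sum_eq_card_mul_iSup_iff_eq_mean (f : ι → ℝ) :
    ∑ i, f i = Fintype.card ι * ⨆ i, f i ↔ ∀ i, f i = (∑ j, f j) / Fintype.card ι := by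
  rw [Real.sum_eq_card_mul_iSup_iff]
  constructor
  · intro h i
    have : Nonempty ι := ⟨i⟩
    have hsum : ∑ j, f j = Fintype.card ι * ⨆ j, f j := by
      rw [Finset.sum_congr rfl fun j _ => h j]
      simp
    rw [hsum, mul_div_cancel_left₀ _ (Nat.cast_ne_zero.2 Fintype.card_ne_zero)]
    exact h i
  · intro h i
    have : Nonempty ι := ⟨i⟩
    rw [iSup_congr h, ciSup_const]
    exact h i

end iSup

theorem Matrix.IsHermitian.eigenvalues_eq_const_iff {𝕜 ι : Type*} [RCLike 𝕜] [Fintype ι]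
    [DecidableEq ι] {A : Matrix ι ι 𝕜} (hA : A.IsHermitian) (c : ℝ) :
    (∀ i, hA.eigenvalues i = c) ↔ A = c • 1 := by
  rw [← Algebra.algebraMap_eq_smul_one]
  constructor
  · intro h
    have hdiag : diagonal (RCLike.ofReal ∘ hA.eigenvalues) =
        algebraMap 𝕜 (Matrix ι ι 𝕜) (algebraMap ℝ 𝕜 c) := by
      rw [algebraMap_eq_diagonal]
      congr 1
      funext i
      simp [h]
    rw [hA.spectral_theorem, hdiag, AlgHomClass.commutes, ← IsScalarTower.algebraMap_apply]
  · intro hA_eq i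
    have : Nonempty ι := ⟨i⟩
    have hspec : spectrum ℝ A = {c} := by rw [hA_eq, spectrum.scalar_eq]
    simpa [hspec] using hA.eigenvalues_mem_spectrum_real i

section lambdaMax

variable {n : ℕ} {w : Matrix (Fin n) (Fin n) ℝ}

theorem lambdaMax_eq_iSup (hw : w.IsHermitian) : lambdaMax w = ⨆ i, hw.eigenvalues i :=
  dif_pos hw

theorem trace_le_mul_lambdaMax (hw : w.IsHermitian) : w.trace ≤ n * lambdaMax w := by
  simpa [hw.trace_eq_sum_eigenvalues, lambdaMax_eq_iSup hw] using
    Real.sum_le_card_mul_iSup hw.eigenvalues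

theorem trace_eq_mul_lambdaMax_iff (hw : w.IsHermitian) :
    w.trace = n * lambdaMax w ↔ w = (w.trace / n) • 1 := by
  rw [hw.trace_eq_sum_eigenvalues, lambdaMax_eq_iSup hw, ← hw.eigenvalues_eq_const_iff]
  simpa using Real.sum_eq_card_mul_iSup_iff_eq_mean hw.eigenvalues

end lambdaMax

theorem EuclideanSpace.dotProduct_self_eq_norm_sq {ι : Type*} [Fintype ι]
    (v : EuclideanSpace ℝ ι) : (fun i => v i) ⬝ᵥ (fun i => v i) = ‖v‖ ^ 2 := by
  rw [← real_inner_self_eq_norm_sq, EuclideanSpace.inner_eq_star_dotProduct]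
  rfl

theorem half_norm_sq_le_eFun_general (n : ℕ)
    (v : EuclideanSpace ℝ (Fin n)) (u : Matrix (Fin n) (Fin n) ℝ)
    (hsymm : u.IsSymm) (htr : u.trace = 0) :
    (1 / 2 : ℝ) * ‖v‖ ^ 2 ≤ eFun v u ∧
    ((1 / 2 : ℝ) * ‖v‖ ^ 2 = eFun v u ↔
      u = vecMulVec (fun i => v i) (fun i => v i)
            - (‖v‖ ^ 2 / n) • (1 : Matrix (Fin n) (Fin n) ℝ)) := by
  set w := vecMulVec (fun i => v i) (fun i => v i) - u with hw_def
  have hvv : (vecMulVec (fun i => v i) (fun i => v i)).IsHermitian := by simp [IsHermitian]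
  have hw : w.IsHermitian := hvv.sub (isHermitian_iff_isSymm.2 hsymm)
  have htrace : w.trace = ‖v‖ ^ 2 := by
    rw [trace_sub, htr, sub_zero, trace_vecMulVec, EuclideanSpace.dotProduct_self_eq_norm_sq]
  have hu : u = vecMulVec (fun i => v i) (fun i => v i) - (‖v‖ ^ 2 / n) • 1 ↔
      w = (‖v‖ ^ 2 / n) • 1 := by
    rw [hw_def, eq_sub_iff_add_eq, sub_eq_iff_eq_add', eq_comm, add_comm]
  rw [eFun, ← hw_def, hu, ← htrace, ← trace_eq_mul_lambdaMax_iff hw]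
  constructor
  · linarith [trace_le_mul_lambdaMax hw]
  · constructor <;> intro h <;> linarith

/-- `(1/2)|v|² ≤ e(v,u)`, with equality iff `u = v⊗v − (|v|²/n)·Iₙ`. -/
theorem half_norm_sq_le_eFun (n : ℕ) (hn : 2 ≤ n)
    (v : EuclideanSpace ℝ (Fin n)) (u : Matrix (Fin n) (Fin n) ℝ)
    (hsymm : u.IsSymm) (htr : u.trace = 0) :
    (1 / 2 : ℝ) * ‖v‖ ^ 2 ≤ eFun v u ∧
    ((1 / 2 : ℝ) * ‖v‖ ^ 2 = eFun v u ↔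
      u = vecMulVec (fun i => v i) (fun i => v i)
            - (‖v‖ ^ 2 / n) • (1 : Matrix (Fin n) (Fin n) ℝ)) :=
  half_norm_sq_le_eFun_general n v u hsymm htr
end

section
/- For all (v,u) ∈ ℝⁿ × S₀ⁿ the operator norm of u satisfies |u|_∞ ≤ 2·((n−1)/n)·e(v,u). -/
open Matrix

/-- The operator norm of a matrix, acting on Euclidean space. -/
noncomputable def opNorm {n : ℕ} (u : Matrix (Fin n) (Fin n) ℝ) : ℝ :=
  ‖(Matrix.toEuclideanCLM (𝕜 := ℝ) (n := Fin n)) u‖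

/-!
Put `M = v vᵀ - u` and `λ = λ_max(M)`. Since `v vᵀ ≥ 0` and `M ≤ λ`, we get `u = v vᵀ - M ≥ -λ`
in the Loewner order, so every eigenvalue of `u` is at least `-λ`. As the eigenvalues of `u` sum
to `tr u = 0`, each of them is also at most `(n - 1) λ`, and `λ ≥ 0`. The operator norm of the
symmetric matrix `u` is the largest absolute value of its eigenvalues, hence `|u|_∞ ≤ (n - 1) λ`,
which is the claim since `e(v, u) = (n / 2) λ`.
-/

open Finset
open scoped Matrix.Norms.L2Operator MatrixOrder

theorem abs_le_card_sub_one_mul_of_sum_eq_zero {ι : Type*} [Fintype ι] {μ : ι → ℝ} {r : ℝ}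
    (hcard : 2 ≤ Fintype.card ι) (hsum : ∑ i, μ i = 0) (hlow : ∀ i, -r ≤ μ i) (i : ι) :
    |μ i| ≤ (Fintype.card ι - 1) * r := by
  classical
  have hcardR : (2 : ℝ) ≤ Fintype.card ι := by exact_mod_cast hcard
  have hr : 0 ≤ r := by
    have : ∑ _j : ι, -r ≤ ∑ j, μ j := sum_le_sum fun j _ => hlow j
    rw [sum_const, card_univ, nsmul_eq_mul, hsum] at this
    nlinarith
  have hrest : -((Fintype.card ι - 1) * r) ≤ ∑ j ∈ univ.erase i, μ j := by
    have : ∑ _j ∈ univ.erase i, -r ≤ ∑ j ∈ univ.erase i, μ j := sum_le_sum fun j _ => hlow j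
    rwa [sum_const, card_erase_of_mem (mem_univ i), card_univ, nsmul_eq_mul,
      Nat.cast_pred (by omega), mul_neg] at this
  have hsplit : μ i + ∑ j ∈ univ.erase i, μ j = 0 := by rw [add_sum_erase _ _ (mem_univ i), hsum]
  rw [abs_le]
  constructor <;> nlinarith [hlow i]

namespace Matrix.IsHermitian

variable {𝕜 ι : Type*} [RCLike 𝕜] [Fintype ι] [DecidableEq ι] {A : Matrix ι ι 𝕜}

theorem l2_opNorm_eq_norm_eigenvalues (hA : A.IsHermitian) : ‖A‖ = ‖hA.eigenvalues‖ := by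
  conv_lhs => rw [hA.spectral_theorem, Unitary.conjStarAlgAut_apply]
  rw [← Unitary.coe_star, CStarRing.norm_mul_coe_unitary, CStarRing.norm_coe_unitary_mul,
    l2_opNorm_diagonal]
  simp [Pi.norm_def]

theorem l2_opNorm_le_of_abs_eigenvalues_le [Nonempty ι] (hA : A.IsHermitian) {C : ℝ}
    (h : ∀ i, |hA.eigenvalues i| ≤ C) : ‖A‖ ≤ C :=
  hA.l2_opNorm_eq_norm_eigenvalues ▸ (pi_norm_le_iff_of_nonempty _).mpr h

theorem le_algebraMap_of_eigenvalues_le (hA : A.IsHermitian) {r : ℝ}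
    (h : ∀ i, hA.eigenvalues i ≤ r) : A ≤ algebraMap ℝ _ r := by
  refine le_algebraMap_of_spectrum_le (fun x hx => ?_) hA.isSelfAdjoint
  obtain ⟨i, rfl⟩ := hA.spectrum_real_eq_range_eigenvalues ▸ hx
  exact h i

theorem le_eigenvalues_of_algebraMap_le (hA : A.IsHermitian) {r : ℝ}
    (h : algebraMap ℝ _ r ≤ A) (i : ι) : r ≤ hA.eigenvalues i :=
  (algebraMap_le_iff_le_spectrum hA.isSelfAdjoint).mp h _ (hA.eigenvalues_mem_spectrum_real i)

end Matrix.IsHermitian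

theorem le_algebraMap_lambdaMax {n : ℕ} {w : Matrix (Fin n) (Fin n) ℝ} (hw : w.IsHermitian) :
    w ≤ algebraMap ℝ _ (lambdaMax w) := by
  rw [lambdaMax, dif_pos hw]
  exact hw.le_algebraMap_of_eigenvalues_le fun i =>
    le_ciSup (Set.finite_range _).bddAbove i

/-- `|u|_∞ ≤ 2 ((n−1)/n) e(v,u)`. -/
theorem opNorm_le_eFun (n : ℕ) (hn : 2 ≤ n)
    (v : EuclideanSpace ℝ (Fin n)) (u : Matrix (Fin n) (Fin n) ℝ)
    (hsymm : u.IsSymm) (htr : u.trace = 0) :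
    opNorm u ≤ 2 * ((n - 1 : ℝ) / n) * eFun v u := by
  set a : Fin n → ℝ := fun i => v i
  have hu : u.IsHermitian := isHermitian_iff_isSymm.mpr hsymm
  have hvv_nonneg : 0 ≤ vecMulVec a a := (posSemidef_vecMulVec_self_star a).nonneg
  set lam := lambdaMax (vecMulVec a a - u)
  have hM_le : vecMulVec a a - u ≤ algebraMap ℝ _ lam :=
    le_algebraMap_lambdaMax ((posSemidef_vecMulVec_self_star a).isHermitian.sub hu)
  have hu_ge : algebraMap ℝ _ (-lam) ≤ u := by
    rw [map_neg]
    calc -algebraMap ℝ _ lam ≤ -(vecMulVec a a - u) := neg_le_neg hM_le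
      _ ≤ u := by simpa using hvv_nonneg
  have hsum : ∑ i, hu.eigenvalues i = 0 := by
    simpa [hu.trace_eq_sum_eigenvalues] using htr
  have : Nonempty (Fin n) := ⟨⟨0, by omega⟩⟩
  have hnorm : opNorm u ≤ (n - 1) * lam :=
    hu.l2_opNorm_le_of_abs_eigenvalues_le fun i => by
      simpa using abs_le_card_sub_one_mul_of_sum_eq_zero (by simpa using hn) hsum
        (hu.le_eigenvalues_of_algebraMap_le hu_ge) i
  calc opNorm u ≤ (n - 1) * lam := hnorm
    _ = 2 * ((n - 1 : ℝ) / n) * eFun v u := by rw [eFun]; field_simp; rfl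
end

section
/- For each r > 0, the convex hull of the set K_r := {(v, v⊗v − (r²/n)Iₙ) : v ∈ ℝⁿ, |v| = r} equals the sublevel set {(v,u) ∈ ℝⁿ × S₀ⁿ : e(v,u) ≤ r²/2}. -/
/-!
Put `M = u + (r²/n) I`. Then `e(v, u) ≤ r²/2` says `v vᵀ ≤ M` in the Loewner order, and
`tr u = 0` says `tr M = r²`, so the theorem is a translate of
`conv {(x, x xᵀ) : |x| = r} = {(v, M) : v vᵀ ≤ M, tr M = r²}`.
The right-hand side is convex because `x ↦ x xᵀ` is Loewner-convex, which gives `⊆`.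
Conversely, write `M - v vᵀ = ∑ xᵢ xᵢᵀ`. A single term is absorbed by splitting
`(v, v vᵀ + x xᵀ)` as a convex combination of the lifts of `v + t⁻¹ x` and `v - t x`, with `t`
chosen so that both points have squared norm `|v|² + |x|²`; by induction on the number of terms
one ends up on the sphere.
-/

open Matrix

/-- The set `K_r` of Euler states of speed `r`. -/
def eulerStates (n : ℕ) (r : ℝ) :
    Set (EuclideanSpace ℝ (Fin n) × Matrix (Fin n) (Fin n) ℝ) :=
  {p | ∃ v : EuclideanSpace ℝ (Fin n), ‖v‖ = r ∧
    p = (v, vecMulVec (fun i => v i) (fun i => v i)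
            - (r ^ 2 / n) • (1 : Matrix (Fin n) (Fin n) ℝ))}

open scoped MatrixOrder Pointwise

theorem exists_pos_quadratic_root {a c : ℝ} (hc : 0 < c) :
    ∃ t : ℝ, 0 < t ∧ c * t ^ 2 - 2 * a * t - c = 0 := by
  have hd := Real.sq_sqrt (add_nonneg (sq_nonneg a) (sq_nonneg c))
  have had : |a| < √(a ^ 2 + c ^ 2) :=
    (Real.lt_sqrt (abs_nonneg _)).2 (by rw [sq_abs]; nlinarith)
  refine ⟨(a + √(a ^ 2 + c ^ 2)) / c, div_pos (by linarith [neg_abs_le a]) hc, ?_⟩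
  field_simp
  linear_combination hd

theorem exists_pos_norm_add_inv_smul_sq_eq {E : Type*} [NormedAddCommGroup E]
    [InnerProductSpace ℝ E] (v x : E) :
    ∃ t : ℝ, 0 < t ∧ ‖v + t⁻¹ • x‖ ^ 2 = ‖v‖ ^ 2 + ‖x‖ ^ 2 ∧
      ‖v - t • x‖ ^ 2 = ‖v‖ ^ 2 + ‖x‖ ^ 2 := by
  rcases eq_or_ne x 0 with rfl | hx
  · exact ⟨1, one_pos, by simp, by simp⟩
  obtain ⟨t, ht, hroot⟩ :=
    exists_pos_quadratic_root (a := inner ℝ v x) (by positivity : 0 < ‖x‖ ^ 2)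
  refine ⟨t, ht, ?_, ?_⟩
  · rw [norm_add_sq_real, inner_smul_right, norm_smul, mul_pow, Real.norm_eq_abs, sq_abs]
    field_simp
    linear_combination -hroot
  · rw [norm_sub_sq_real, inner_smul_right, norm_smul, mul_pow, Real.norm_eq_abs, sq_abs]
    linear_combination hroot

theorem posSemidef_vecMulVec_self {ι : Type*} [Finite ι] (x : ι → ℝ) :
    (vecMulVec x x).PosSemidef := by
  simpa using posSemidef_vecMulVec_self_star x

section LambdaMax

variable {n : ℕ} [NeZero n]

theorem lambdaMax_le_iff {w : Matrix (Fin n) (Fin n) ℝ} (hw : w.IsHermitian) {a : ℝ} :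
    lambdaMax w ≤ a ↔ w ≤ a • 1 := by
  rw [lambdaMax, dif_pos hw, ciSup_le_iff (Set.finite_range _).bddAbove,
    ← Algebra.algebraMap_eq_smul_one, le_algebraMap_iff_spectrum_le hw.isSelfAdjoint,
    hw.spectrum_real_eq_range_eigenvalues, Set.forall_mem_range]

theorem eFun_le_iff {v : EuclideanSpace ℝ (Fin n)} {u : Matrix (Fin n) (Fin n) ℝ}
    (hu : u.IsHermitian) {a : ℝ} :
    eFun v u ≤ n / 2 * a ↔ vecMulVec v v - u ≤ a • 1 := by
  have hn : (0 : ℝ) < n / 2 := by have := NeZero.pos n; positivity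
  rw [eFun, mul_le_mul_iff_right₀ hn]
  exact lambdaMax_le_iff ((posSemidef_vecMulVec_self _).isHermitian.sub hu)

end LambdaMax

section QuadraticLift

variable {ι : Type*}

def quadraticLift (x : EuclideanSpace ℝ ι) : EuclideanSpace ℝ ι × Matrix ι ι ℝ :=
  (x, vecMulVec x x)

theorem quadraticLift_add_mem_segment (v x : EuclideanSpace ℝ ι) (R : Matrix ι ι ℝ) {t : ℝ}
    (ht : 0 < t) :
    quadraticLift v + (0, vecMulVec x x + R) ∈
      segment ℝ (quadraticLift (v + t⁻¹ • x) + (0, R)) (quadraticLift (v - t • x) + (0, R)) := by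
  refine ⟨t ^ 2 / (1 + t ^ 2), 1 / (1 + t ^ 2), by positivity, by positivity,
    by field_simp; ring, ?_⟩
  ext i
  · simp [quadraticLift]
    field_simp
    ring
  · simp [quadraticLift, vecMulVec_apply]
    field_simp
    ring

variable [Fintype ι]

theorem vecMulVec_smul_add_smul_le (x y : ι → ℝ) {a b : ℝ} (ha : 0 ≤ a) (hb : 0 ≤ b)
    (hab : a + b = 1) :
    vecMulVec (a • x + b • y) (a • x + b • y) ≤ a • vecMulVec x x + b • vecMulVec y y := by
  have hdiff : a • vecMulVec x x + b • vecMulVec y y - vecMulVec (a • x + b • y) (a • x + b • y)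
      = (a * b) • vecMulVec (x - y) (x - y) := by
    obtain rfl := eq_sub_of_add_eq' hab
    ext i j
    simp only [Matrix.sub_apply, Matrix.add_apply, Matrix.smul_apply, vecMulVec_apply,
      Pi.add_apply, Pi.sub_apply, Pi.smul_apply, smul_eq_mul]
    ring
  rw [le_iff, hdiff]
  exact (posSemidef_vecMulVec_self _).smul (mul_nonneg ha hb)

theorem convex_setOf_vecMulVec_le :
    Convex ℝ {p : EuclideanSpace ℝ ι × Matrix ι ι ℝ | vecMulVec p.1 p.1 ≤ p.2} := by
  rintro ⟨x, M⟩ hxM ⟨y, N⟩ hyN a b ha hb hab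
  calc vecMulVec (a • x + b • y).ofLp (a • x + b • y).ofLp
      ≤ a • vecMulVec x x + b • vecMulVec y y := vecMulVec_smul_add_smul_le _ _ ha hb hab
    _ ≤ a • M + b • N := add_le_add (smul_le_smul_of_nonneg_left hxM ha)
        (smul_le_smul_of_nonneg_left hyN hb)

theorem convex_setOf_trace_eq (c : ℝ) :
    Convex ℝ {p : EuclideanSpace ℝ ι × Matrix ι ι ℝ | p.2.trace = c} :=
  convex_hyperplane ((traceLinearMap ι ℝ ℝ).comp (LinearMap.snd ℝ _ _)).isLinear c

theorem trace_vecMulVec_self_eq_norm_sq (x : EuclideanSpace ℝ ι) :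
    (vecMulVec x x).trace = ‖x‖ ^ 2 := by
  rw [trace_vecMulVec, EuclideanSpace.real_norm_sq_eq]
  simp [dotProduct, sq]

theorem quadraticLift_add_sum_mem_convexHull {r : ℝ} (hr : 0 ≤ r) {m : ℕ}
    (x : Fin m → EuclideanSpace ℝ ι) (v : EuclideanSpace ℝ ι)
    (hv : ‖v‖ ^ 2 + ∑ i, ‖x i‖ ^ 2 = r ^ 2) :
    quadraticLift v + (0, ∑ i, vecMulVec (x i) (x i)) ∈
      convexHull ℝ (quadraticLift '' Metric.sphere 0 r) := by
  induction m generalizing v with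
  | zero =>
    simp only [Finset.univ_eq_empty, Finset.sum_empty, add_zero, Prod.mk_zero_zero] at hv ⊢
    refine subset_convexHull ℝ _ ⟨v, ?_, rfl⟩
    rw [mem_sphere_zero_iff_norm]
    exact (sq_eq_sq₀ (norm_nonneg v) hr).1 hv
  | succ m ih =>
    rw [Fin.sum_univ_succ] at hv ⊢
    obtain ⟨t, ht, hplus, hminus⟩ := exists_pos_norm_add_inv_smul_sq_eq v (x 0)
    have hsplit := fun w (hw : ‖w‖ ^ 2 = ‖v‖ ^ 2 + ‖x 0‖ ^ 2) =>
      ih (fun i => x i.succ) w (by rw [hw, ← hv]; ring)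
    exact (convex_convexHull ℝ _).segment_subset (hsplit _ hplus) (hsplit _ hminus)
      (quadraticLift_add_mem_segment v (x 0) _ ht)

theorem convexHull_quadraticLift_sphere {r : ℝ} (hr : 0 ≤ r) :
    convexHull ℝ (quadraticLift '' Metric.sphere (0 : EuclideanSpace ℝ ι) r) =
      {p | vecMulVec p.1 p.1 ≤ p.2 ∧ p.2.trace = r ^ 2} := by
  refine subset_antisymm (convexHull_min ?_ (convex_setOf_vecMulVec_le.inter
    (convex_setOf_trace_eq _))) ?_
  · rintro _ ⟨x, hx, rfl⟩
    rw [mem_sphere_zero_iff_norm] at hx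
    exact ⟨le_rfl, hx ▸ trace_vecMulVec_self_eq_norm_sq x⟩
  · rintro ⟨v, M⟩ ⟨hle, htr⟩
    obtain ⟨m, x, hx⟩ := posSemidef_iff_eq_sum_vecMulVec.1 (le_iff.1 hle)
    simp only [star_trivial] at hx
    have hM : M = vecMulVec v v + ∑ i, vecMulVec (WithLp.toLp 2 (x i)) (WithLp.toLp 2 (x i)) := by
      rw [← hx]; abel
    have hmem := quadraticLift_add_sum_mem_convexHull hr (fun i => WithLp.toLp 2 (x i)) v (by
      rw [← htr, hM, trace_add, trace_sum, trace_vecMulVec_self_eq_norm_sq]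
      congr 1
      exact Finset.sum_congr rfl fun i _ => (trace_vecMulVec_self_eq_norm_sq _).symm)
    convert hmem using 1
    simp [quadraticLift, hM]

end QuadraticLift

theorem eulerStates_eq_vadd (n : ℕ) (r : ℝ) :
    eulerStates n r =
      ((0 : EuclideanSpace ℝ (Fin n)), -((r ^ 2 / n : ℝ) • (1 : Matrix (Fin n) (Fin n) ℝ))) +ᵥ
        quadraticLift '' Metric.sphere 0 r := by
  ext ⟨v, u⟩
  simp only [eulerStates, Set.mem_vadd_set_iff_neg_vadd_mem]
  simp [quadraticLift, eq_sub_iff_add_eq', eq_comm]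

/-- the convex hull of `K_r` is the sublevel set `{e ≤ r²/2}`. -/
theorem convexHull_eulerStates (n : ℕ) (hn : 2 ≤ n) (r : ℝ) (hr : 0 < r) :
    convexHull ℝ (eulerStates n r) =
      {p : EuclideanSpace ℝ (Fin n) × Matrix (Fin n) (Fin n) ℝ |
        p.2.IsSymm ∧ p.2.trace = 0 ∧ eFun p.1 p.2 ≤ r ^ 2 / 2} := by
  have : NeZero n := ⟨by omega⟩
  set D : Matrix (Fin n) (Fin n) ℝ := (r ^ 2 / n : ℝ) • 1
  have hD : D.PosSemidef := PosSemidef.one.smul (by positivity)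
  have htrD : D.trace = r ^ 2 := by simp [D, field]
  rw [eulerStates_eq_vadd, convexHull_vadd, convexHull_quadraticLift_sphere hr.le,
    show r ^ 2 / 2 = n / 2 * (r ^ 2 / n) by field_simp]
  ext ⟨v, u⟩
  simp only [Set.mem_vadd_set_iff_neg_vadd_mem, Prod.neg_mk, neg_neg, neg_zero, vadd_eq_add,
    Prod.mk_add_mk, zero_add, Set.mem_ofPred_eq]
  rw [← sub_le_iff_le_add, trace_add, htrD, add_eq_left, ← isHermitian_iff_isSymm]
  constructor
  · rintro ⟨hle, htr⟩
    have hu : u.IsHermitian := by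
      convert ((le_iff.1 hle).isHermitian.add (posSemidef_vecMulVec_self v).isHermitian).sub
        hD.isHermitian using 1
      abel
    exact ⟨hu, htr, (eFun_le_iff hu).2 hle⟩
  · rintro ⟨hu, htr, he⟩
    exact ⟨(eFun_le_iff hu).1 he, htr⟩
end

section
/- Let a,b ∈ ℝ^{n+1} with a_{n+1} = b_{n+1} = 0, |a| = |b|, a ≠ ±b. Set R := a⊗b − b⊗a and Q(ξ) := ξ⊗e_{n+1} − e_{n+1}⊗ξ, and define A(ξ) := (1/2)(Rξ ⊗ Q(ξ)ξ + Q(ξ)ξ ⊗ Rξ). Then for every ξ ∈ ℝ^{n+1}: A(ξ)ξ = 0, A(ξ) is symmetric, ⟨A(ξ)e_{n+1}, e_{n+1}⟩ = 0, and tr A(ξ) = 0. -/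
/-!
`R` and `Q(ξ)` are both of the form `u ⊗ v − v ⊗ u`, which sends `x` to `(v·x) u − (u·x) v`.
Hence `Rξ` and `Q(ξ)ξ` are orthogonal to `ξ`, `Rξ` lies in `span {a, b} ⊥ e_{n+1}`, and
`Q(ξ)ξ` lies in `span {ξ, e_{n+1}}`, so `Rξ ⊥ Q(ξ)ξ`. The four properties of the symmetric
product `A(ξ)` of `Rξ` and `Q(ξ)ξ` follow from these orthogonality relations.
-/

open Matrix

variable {ι α : Type*} [Fintype ι]

section CommSemiring

variable [CommSemiring α]

def symmMatrix (u v : ι → α) : Matrix ι ι α := vecMulVec u v + vecMulVec v u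

lemma vecMulVec_mulVec_eq_smul (u v w : ι → α) :
    vecMulVec u v *ᵥ w = (v ⬝ᵥ w) • u := by
  rw [vecMulVec_mulVec, op_smul_eq_smul]

lemma symmMatrix_mulVec (u v x : ι → α) :
    symmMatrix u v *ᵥ x = (v ⬝ᵥ x) • u + (u ⬝ᵥ x) • v := by
  rw [symmMatrix, add_mulVec, vecMulVec_mulVec_eq_smul, vecMulVec_mulVec_eq_smul]

omit [Fintype ι] in
lemma symmMatrix_isSymm (u v : ι → α) : (symmMatrix u v).IsSymm := by
  rw [IsSymm, symmMatrix, transpose_add, transpose_vecMulVec, transpose_vecMulVec, add_comm]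

lemma symmMatrix_mulVec_eq_zero {u v x : ι → α} (hu : u ⬝ᵥ x = 0) (hv : v ⬝ᵥ x = 0) :
    symmMatrix u v *ᵥ x = 0 := by
  rw [symmMatrix_mulVec, hu, hv, zero_smul, zero_smul, add_zero]

lemma symmMatrix_mulVec_dotProduct_self_eq_zero {u x : ι → α} (hu : u ⬝ᵥ x = 0) (v : ι → α) :
    symmMatrix u v *ᵥ x ⬝ᵥ x = 0 := by
  rw [symmMatrix_mulVec, add_dotProduct, smul_dotProduct, smul_dotProduct, hu, smul_eq_mul,
    smul_eq_mul, mul_zero, zero_mul, add_zero]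

lemma trace_symmMatrix (u v : ι → α) : (symmMatrix u v).trace = 2 * (u ⬝ᵥ v) := by
  rw [symmMatrix, trace_add, trace_vecMulVec, trace_vecMulVec, dotProduct_comm v u, two_mul]

end CommSemiring

section CommRing

variable [CommRing α]

def wedgeMatrix (u v : ι → α) : Matrix ι ι α := vecMulVec u v - vecMulVec v u

lemma wedgeMatrix_mulVec (u v x : ι → α) :
    wedgeMatrix u v *ᵥ x = (v ⬝ᵥ x) • u - (u ⬝ᵥ x) • v := by
  rw [wedgeMatrix, sub_mulVec, vecMulVec_mulVec_eq_smul, vecMulVec_mulVec_eq_smul]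

lemma wedgeMatrix_mulVec_dotProduct (u v x y : ι → α) :
    wedgeMatrix u v *ᵥ x ⬝ᵥ y = (v ⬝ᵥ x) * (u ⬝ᵥ y) - (u ⬝ᵥ x) * (v ⬝ᵥ y) := by
  rw [wedgeMatrix_mulVec, sub_dotProduct, smul_dotProduct, smul_dotProduct, smul_eq_mul,
    smul_eq_mul]

lemma wedgeMatrix_mulVec_dotProduct_self (u v x : ι → α) :
    wedgeMatrix u v *ᵥ x ⬝ᵥ x = 0 := by
  rw [wedgeMatrix_mulVec_dotProduct, dotProduct_comm v x, dotProduct_comm u x]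
  ring

lemma wedgeMatrix_mulVec_dotProduct_eq_zero {u v y : ι → α} (hu : u ⬝ᵥ y = 0)
    (hv : v ⬝ᵥ y = 0) (x : ι → α) : wedgeMatrix u v *ᵥ x ⬝ᵥ y = 0 := by
  rw [wedgeMatrix_mulVec_dotProduct, hu, hv]
  ring

end CommRing

theorem symbol_properties_general (n : ℕ)
    (a b : EuclideanSpace ℝ (Fin (n + 1)))
    (ha : a (Fin.last n) = 0) (hb : b (Fin.last n) = 0) :
    let e : Fin (n + 1) → ℝ := Pi.single (Fin.last n) 1
    let R : Matrix (Fin (n + 1)) (Fin (n + 1)) ℝ :=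
      vecMulVec (fun i => a i) (fun i => b i) - vecMulVec (fun i => b i) (fun i => a i)
    let Q : (Fin (n + 1) → ℝ) → Matrix (Fin (n + 1)) (Fin (n + 1)) ℝ :=
      fun ξ => vecMulVec ξ e - vecMulVec e ξ
    let A : (Fin (n + 1) → ℝ) → Matrix (Fin (n + 1)) (Fin (n + 1)) ℝ :=
      fun ξ => (1 / 2 : ℝ) •
        (vecMulVec (R.mulVec ξ) ((Q ξ).mulVec ξ)
          + vecMulVec ((Q ξ).mulVec ξ) (R.mulVec ξ))
    ∀ ξ : Fin (n + 1) → ℝ,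
      (A ξ).mulVec ξ = 0 ∧ (A ξ).IsSymm ∧
      ((A ξ).mulVec e) ⬝ᵥ e = 0 ∧ (A ξ).trace = 0 := by
  intro e R Q A ξ
  have hRξ : R *ᵥ ξ ⬝ᵥ ξ = 0 := wedgeMatrix_mulVec_dotProduct_self _ _ ξ
  have hQξ : Q ξ *ᵥ ξ ⬝ᵥ ξ = 0 := wedgeMatrix_mulVec_dotProduct_self _ _ ξ
  have hRe : R *ᵥ ξ ⬝ᵥ e = 0 :=
    wedgeMatrix_mulVec_dotProduct_eq_zero (by simp [e, ha]) (by simp [e, hb]) ξ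
  have hQR : Q ξ *ᵥ ξ ⬝ᵥ R *ᵥ ξ = 0 := wedgeMatrix_mulVec_dotProduct_eq_zero
    (by rwa [dotProduct_comm]) (by rwa [dotProduct_comm]) ξ
  have hA : A ξ = (1 / 2 : ℝ) • symmMatrix (R *ᵥ ξ) (Q ξ *ᵥ ξ) := rfl
  rw [hA]
  refine ⟨?_, (symmMatrix_isSymm _ _).smul _, ?_, ?_⟩
  · rw [smul_mulVec, symmMatrix_mulVec_eq_zero hRξ hQξ, smul_zero]
  · rw [smul_mulVec, smul_dotProduct, symmMatrix_mulVec_dotProduct_self_eq_zero hRe, smul_zero]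
  · rw [trace_smul, trace_symmMatrix, dotProduct_comm, hQR, mul_zero, smul_zero]

/-- the cubic matrix-valued symbol `A(ξ) = (Rξ) ⊙ (Q(ξ)ξ)`
satisfies `A(ξ)ξ = 0`, symmetry, vanishing `(n+1,n+1)` entry and zero trace. -/
theorem symbol_properties (n : ℕ) (hn : 2 ≤ n)
    (a b : EuclideanSpace ℝ (Fin (n + 1)))
    (ha : a (Fin.last n) = 0) (hb : b (Fin.last n) = 0)
    (hab : ‖a‖ = ‖b‖) (hne : a ≠ b) (hne' : a ≠ -b) :
    let e : Fin (n + 1) → ℝ := Pi.single (Fin.last n) 1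
    let R : Matrix (Fin (n + 1)) (Fin (n + 1)) ℝ :=
      vecMulVec (fun i => a i) (fun i => b i) - vecMulVec (fun i => b i) (fun i => a i)
    let Q : (Fin (n + 1) → ℝ) → Matrix (Fin (n + 1)) (Fin (n + 1)) ℝ :=
      fun ξ => vecMulVec ξ e - vecMulVec e ξ
    let A : (Fin (n + 1) → ℝ) → Matrix (Fin (n + 1)) (Fin (n + 1)) ℝ :=
      fun ξ => (1 / 2 : ℝ) •
        (vecMulVec (R.mulVec ξ) ((Q ξ).mulVec ξ)
          + vecMulVec ((Q ξ).mulVec ξ) (R.mulVec ξ))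
    ∀ ξ : Fin (n + 1) → ℝ,
      (A ξ).mulVec ξ = 0 ∧ (A ξ).IsSymm ∧
      ((A ξ).mulVec e) ⬝ᵥ e = 0 ∧ (A ξ).trace = 0 :=
  symbol_properties_general n a b ha hb
end

section
/- With notation as above, and η := (−1/(|a||b| + a·b)^{2/3})·(a + b − (|a||b| + a·b)e_{n+1}), one has A(η) = U_a − U_b, where U_v is the (n+1)×(n+1) matrix with upper-left n×n block v⊗v, last column and last row equal to v (in the first n entries), and (n+1,n+1) entry 0; explicitly A(η) has upper-left block a⊗a − b⊗b, last column/row a − b, and (n+1,n+1) entry 0. -/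
open Matrix

/-!
Write `c = |a||b| + a·b` and `η = s (a + b - c e)` with `s = -c^{-2/3}`. Since `a, b ⟂ e` and
`|a| = |b|`, the rank-two maps act on `η` by `Rη = s c (a - b)` and `Q(η)η = -s² c (a + b + 2e)`,
so `A(η) = -s³c² · (a - b) ⊙ (a + b + 2e)`. The exponent `2/3` is chosen so that `s³c² = -1`,
and `(a - b) ⊙ (a + b + 2e) = U_a - U_b`. Finally `c = |a + b|² / 2 > 0` because `a ≠ -b`.
-/

theorem dotProduct_ofLp_eq_inner {ι : Type*} [Fintype ι] (x y : EuclideanSpace ℝ ι) :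
    x.ofLp ⬝ᵥ y.ofLp = inner ℝ x y := by
  simp [EuclideanSpace.inner_eq_star_dotProduct, dotProduct_comm]

theorem norm_mul_norm_add_inner_pos {E : Type*} [NormedAddCommGroup E] [InnerProductSpace ℝ E]
    {a b : E} (hab : ‖a‖ = ‖b‖) (hne : a ≠ -b) : 0 < ‖a‖ * ‖b‖ + inner ℝ a b := by
  have hsum : ‖a + b‖ ^ 2 = 2 * (‖a‖ * ‖b‖ + inner ℝ a b) := by
    rw [norm_add_sq_real, hab]
    ring
  have hpos : 0 < ‖a + b‖ := norm_pos_iff.mpr fun h => hne (eq_neg_of_add_eq_zero_left h)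
  nlinarith [pow_pos hpos 2]

theorem neg_one_div_rpow_two_thirds_pow_three_mul_sq {c : ℝ} (hc : 0 < c) :
    (-1 / c ^ ((2 : ℝ) / 3)) ^ 3 * c ^ 2 = -1 := by
  have hcube : (c ^ ((2 : ℝ) / 3)) ^ 3 = c ^ 2 := by
    rw [← Real.rpow_natCast, ← Real.rpow_mul hc.le]
    norm_num
  rw [div_pow, hcube]
  field_simp

section RankTwo

variable {ι R : Type*} [Fintype ι] [CommRing R]

theorem vecMulVec_sub_vecMulVec_mulVec (u v x : ι → R) :
    (vecMulVec u v - vecMulVec v u) *ᵥ x = (v ⬝ᵥ x) • u - (u ⬝ᵥ x) • v := by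
  simp only [sub_mulVec, vecMulVec_mulVec, op_smul_eq_smul]

variable {a b e : ι → R} {c : R}

theorem vecMulVec_sub_vecMulVec_mulVec_smul_add_sub (hae : a ⬝ᵥ e = 0) (hbe : b ⬝ᵥ e = 0)
    (hab : a ⬝ᵥ a = b ⬝ᵥ b) (hc : a ⬝ᵥ a + a ⬝ᵥ b = c) (s : R) :
    (vecMulVec a b - vecMulVec b a) *ᵥ (s • (a + b - c • e)) = (s * c) • (a - b) := by
  subst hc
  rw [vecMulVec_sub_vecMulVec_mulVec]
  simp only [dotProduct_smul, dotProduct_add, dotProduct_sub, hae, hbe, dotProduct_comm b a,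
    smul_eq_mul, ← hab]
  module

theorem vecMulVec_sub_vecMulVec_mulVec_self (hae : a ⬝ᵥ e = 0) (hbe : b ⬝ᵥ e = 0)
    (hee : e ⬝ᵥ e = 1) (hab : a ⬝ᵥ a = b ⬝ᵥ b) (hc : a ⬝ᵥ a + a ⬝ᵥ b = c) (s : R) :
    let ξ := s • (a + b - c • e)
    (vecMulVec ξ e - vecMulVec e ξ) *ᵥ ξ = (-(s ^ 2 * c)) • (a + b + (2 : R) • e) := by
  intro ξ
  have hea : e ⬝ᵥ a = 0 := by rw [dotProduct_comm, hae]
  have heb : e ⬝ᵥ b = 0 := by rw [dotProduct_comm, hbe]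
  have heξ : e ⬝ᵥ ξ = -(s * c) := by
    simp only [ξ, dotProduct_smul, dotProduct_add, dotProduct_sub, hea, heb, hee, smul_eq_mul]
    ring
  have hξξ : ξ ⬝ᵥ ξ = s ^ 2 * (2 * c + c ^ 2) := by
    simp only [ξ, dotProduct_smul, smul_dotProduct, dotProduct_add, dotProduct_sub,
      add_dotProduct, sub_dotProduct, hae, hbe, hea, heb, hee, dotProduct_comm b a, smul_eq_mul]
    linear_combination s ^ 2 * (2 * hc - hab)
  rw [vecMulVec_sub_vecMulVec_mulVec, heξ, hξξ]
  module

end RankTwo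

theorem half_smul_vecMulVec_sub_add_symm {ι K : Type*} [Field K] [CharZero K] (u v e : ι → K) :
    (1 / 2 : K) •
        (vecMulVec (u - v) (u + v + (2 : K) • e) + vecMulVec (u + v + (2 : K) • e) (u - v))
      = (vecMulVec u u + vecMulVec u e + vecMulVec e u)
        - (vecMulVec v v + vecMulVec v e + vecMulVec e v) := by
  ext i j
  simp only [Matrix.smul_apply, Matrix.add_apply, Matrix.sub_apply, vecMulVec_apply,
    Pi.add_apply, Pi.sub_apply, Pi.smul_apply, smul_eq_mul]
  ring

theorem symbol_at_eta_general (n : ℕ)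
    (a b : EuclideanSpace ℝ (Fin (n + 1)))
    (ha : a (Fin.last n) = 0) (hb : b (Fin.last n) = 0)
    (hab : ‖a‖ = ‖b‖) (hne' : a ≠ -b) :
    let e : Fin (n + 1) → ℝ := Pi.single (Fin.last n) 1
    let R : Matrix (Fin (n + 1)) (Fin (n + 1)) ℝ :=
      vecMulVec (fun i => a i) (fun i => b i) - vecMulVec (fun i => b i) (fun i => a i)
    let Q : (Fin (n + 1) → ℝ) → Matrix (Fin (n + 1)) (Fin (n + 1)) ℝ :=
      fun ξ => vecMulVec ξ e - vecMulVec e ξ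
    let A : (Fin (n + 1) → ℝ) → Matrix (Fin (n + 1)) (Fin (n + 1)) ℝ :=
      fun ξ => (1 / 2 : ℝ) •
        (vecMulVec (R.mulVec ξ) ((Q ξ).mulVec ξ)
          + vecMulVec ((Q ξ).mulVec ξ) (R.mulVec ξ))
    -- the matrix `U_v` with upper-left block `v⊗v`, last row/column `v`,
    -- and vanishing `(n+1,n+1)` entry (for `v` with last coordinate zero)
    let U : (Fin (n + 1) → ℝ) → Matrix (Fin (n + 1)) (Fin (n + 1)) ℝ :=
      fun v => vecMulVec v v + vecMulVec v e + vecMulVec e v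
    let η : Fin (n + 1) → ℝ :=
      (-1 / (‖a‖ * ‖b‖ + (inner ℝ a b : ℝ)) ^ ((2 : ℝ) / 3)) •
        ((fun i => a i) + (fun i => b i) - (‖a‖ * ‖b‖ + (inner ℝ a b : ℝ)) • e)
    A η = U (fun i => a i) - U (fun i => b i) := by
  intro e R Q A U η
  set c := ‖a‖ * ‖b‖ + inner ℝ a b
  set s := -1 / c ^ ((2 : ℝ) / 3)
  have hae : a.ofLp ⬝ᵥ e = 0 := by simp [e, ha]
  have hbe : b.ofLp ⬝ᵥ e = 0 := by simp [e, hb]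
  have hee : e ⬝ᵥ e = 1 := by simp [e]
  have haa : a.ofLp ⬝ᵥ a.ofLp = b.ofLp ⬝ᵥ b.ofLp := by
    simp only [dotProduct_ofLp_eq_inner, real_inner_self_eq_norm_sq, hab]
  have hc : a.ofLp ⬝ᵥ a.ofLp + a.ofLp ⬝ᵥ b.ofLp = c := by
    simp only [c, dotProduct_ofLp_eq_inner, real_inner_self_eq_norm_mul_norm]
    rw [hab]
  have hRη : R *ᵥ η = (s * c) • (a.ofLp - b.ofLp) :=
    vecMulVec_sub_vecMulVec_mulVec_smul_add_sub hae hbe haa hc s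
  have hQη : Q η *ᵥ η = (-(s ^ 2 * c)) • (a.ofLp + b.ofLp + (2 : ℝ) • e) :=
    vecMulVec_sub_vecMulVec_mulVec_self hae hbe hee haa hc s
  calc A η = (-(s ^ 3 * c ^ 2)) • ((1 / 2 : ℝ) •
        (vecMulVec (a.ofLp - b.ofLp) (a.ofLp + b.ofLp + (2 : ℝ) • e)
          + vecMulVec (a.ofLp + b.ofLp + (2 : ℝ) • e) (a.ofLp - b.ofLp))) := by
        simp only [A, hRη, hQη, smul_vecMulVec, vecMulVec_smul]
        module
    _ = U a.ofLp - U b.ofLp := by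
        rw [neg_one_div_rpow_two_thirds_pow_three_mul_sq (norm_mul_norm_add_inner_pos hab hne'),
          neg_neg, one_smul, half_smul_vecMulVec_sub_add_symm]

/-- evaluating the symbol at the special direction `η` yields
`U_a − U_b`, the difference of the two Euler-state matrices. -/
theorem symbol_at_eta (n : ℕ) (hn : 2 ≤ n)
    (a b : EuclideanSpace ℝ (Fin (n + 1)))
    (ha : a (Fin.last n) = 0) (hb : b (Fin.last n) = 0)
    (hab : ‖a‖ = ‖b‖) (hne : a ≠ b) (hne' : a ≠ -b) :
    let e : Fin (n + 1) → ℝ := Pi.single (Fin.last n) 1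
    let R : Matrix (Fin (n + 1)) (Fin (n + 1)) ℝ :=
      vecMulVec (fun i => a i) (fun i => b i) - vecMulVec (fun i => b i) (fun i => a i)
    let Q : (Fin (n + 1) → ℝ) → Matrix (Fin (n + 1)) (Fin (n + 1)) ℝ :=
      fun ξ => vecMulVec ξ e - vecMulVec e ξ
    let A : (Fin (n + 1) → ℝ) → Matrix (Fin (n + 1)) (Fin (n + 1)) ℝ :=
      fun ξ => (1 / 2 : ℝ) •
        (vecMulVec (R.mulVec ξ) ((Q ξ).mulVec ξ)
          + vecMulVec ((Q ξ).mulVec ξ) (R.mulVec ξ))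
    -- the matrix `U_v` with upper-left block `v⊗v`, last row/column `v`,
    -- and vanishing `(n+1,n+1)` entry (for `v` with last coordinate zero)
    let U : (Fin (n + 1) → ℝ) → Matrix (Fin (n + 1)) (Fin (n + 1)) ℝ :=
      fun v => vecMulVec v v + vecMulVec v e + vecMulVec e v
    let η : Fin (n + 1) → ℝ :=
      (-1 / (‖a‖ * ‖b‖ + (inner ℝ a b : ℝ)) ^ ((2 : ℝ) / 3)) •
        ((fun i => a i) + (fun i => b i) - (‖a‖ * ‖b‖ + (inner ℝ a b : ℝ)) • e)
    A η = U (fun i => a i) - U (fun i => b i) :=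
  symbol_at_eta_general n a b ha hb hab hne'
end

section
/- Let (X,d) be a complete metric space and I : X → ℝ a bounded lower-semicontinuous functional with I ≤ 0 on X. Suppose there is a dense subset X₀ ⊂ X such that for every α > 0 there exists β > 0 with the property: whenever v ∈ X₀ and I(v) < −α, there exists a sequence v_k ∈ X₀ with v_k → v in X and liminf I(v_k) ≥ I(v) + β. Then the set {v ∈ X : I(v) = 0} is residual (contains a dense G_δ) in X. -/
/-!
For `γ > 0` the superlevel set `{I > -γ}` is open by lower semicontinuity, and it is dense:
on a nonempty open set `U` with `I ≤ -γ`, lower semicontinuity and density of `X₀` give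
`v ∈ X₀ ∩ U` with `I v` within `β` of `sup_U I`; a sequence converging to `v` eventually
stays in `U`, so its liminf is at most `sup_U I < I v + β`, contradicting the perturbation
property.
Intersecting these sets over `γ = 1/(n+1)` gives a residual set on which `I ≥ 0`, i.e. `I = 0`.
-/

open Filter Topology

section

variable {X : Type*} [TopologicalSpace X] {f : X → ℝ}

theorem LowerSemicontinuous.isBoundedUnder_ge_of_tendsto (hf : LowerSemicontinuous f)
    {ι : Type*} {l : Filter ι} {w : ι → X} {v : X} (hw : Tendsto w l (𝓝 v)) :
    IsBoundedUnder (· ≥ ·) l (fun i => f (w i)) :=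
  isBoundedUnder_of_eventually_ge <|
    (hw.eventually (hf v (f v - 1) (sub_one_lt _))).mono fun _ h => h.le

theorem LowerSemicontinuous.exists_mem_forall_liminf_lt (hf : LowerSemicontinuous f)
    {X₀ : Set X} (hX₀ : Dense X₀) {U : Set X} (hU : IsOpen U) (hne : U.Nonempty)
    (hbdd : BddAbove (f '' U)) {β : ℝ} (hβ : 0 < β) :
    ∃ v ∈ U ∩ X₀, ∀ {ι : Type*} (l : Filter ι) [l.NeBot] (w : ι → X),
      Tendsto w l (𝓝 v) → l.liminf (fun i => f (w i)) < f v + β := by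
  set s := sSup (f '' U)
  have hle_s : ∀ x ∈ U, f x ≤ s := fun x hx => le_csSup hbdd ⟨x, hx, rfl⟩
  obtain ⟨_, ⟨u, hu, rfl⟩, hsu⟩ :=
    exists_lt_of_lt_csSup (hne.image f) (show s - β < s by linarith)
  obtain ⟨O, hO, hOopen, huO⟩ := eventually_nhds_iff.1 (hf u (s - β) hsu)
  obtain ⟨v, ⟨hvU, hvO⟩, hvX₀⟩ :=
    hX₀.inter_open_nonempty _ (hU.inter hOopen) ⟨u, hu, huO⟩
  refine ⟨v, ⟨hvU, hvX₀⟩, fun l _ w hw => ?_⟩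
  have hliminf_le : l.liminf (fun i => f (w i)) ≤ s :=
    liminf_le_of_frequently_le
      ((hw.eventually (hU.mem_nhds hvU)).mono fun i hi => hle_s _ hi).frequently
      (hf.isBoundedUnder_ge_of_tendsto hw)
  linarith [hO v hvO]

theorem LowerSemicontinuous.dense_setOf_lt_of_forall_liminf_ge
    (hf : LowerSemicontinuous f) {X₀ : Set X} (hX₀ : Dense X₀) {a b β : ℝ} (hβ : 0 < β)
    (hba : b < a) (hperturb : ∀ v ∈ X₀, f v < a → ∃ w : ℕ → X,
      Tendsto w atTop (𝓝 v) ∧ f v + β ≤ atTop.liminf (fun k => f (w k))) :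
    Dense {x | b < f x} := by
  rw [dense_iff_inter_open]
  intro U hU hne
  by_contra hempty
  have hle : ∀ x ∈ U, f x ≤ b := fun x hx => not_lt.1 fun h => hempty ⟨x, hx, h⟩
  obtain ⟨v, ⟨hvU, hvX₀⟩, hv⟩ := hf.exists_mem_forall_liminf_lt hX₀ hU hne
    ⟨b, Set.forall_mem_image.2 hle⟩ hβ
  obtain ⟨w, hw, hβw⟩ := hperturb v hvX₀ ((hle v hvU).trans_lt hba)
  exact (hv atTop w hw).not_ge hβw

theorem LowerSemicontinuous.setOf_le_mem_residual (hf : LowerSemicontinuous f) {a : ℝ}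
    (hdense : ∀ b < a, Dense {x | b < f x}) : {x | a ≤ f x} ∈ residual X := by
  have hmem : (⋂ n : ℕ, {x | a - 1 / (n + 1 : ℝ) < f x}) ∈ residual X :=
    countable_iInter_mem.2 fun n =>
      residual_of_dense_open (hf.isOpen_preimage _)
        (hdense _ (sub_lt_self a Nat.one_div_pos_of_nat))
  refine mem_of_superset hmem fun x hx => show a ≤ f x from not_lt.1 fun hlt => ?_
  obtain ⟨n, hn⟩ := exists_nat_one_div_lt (sub_pos.2 hlt)
  have hxn : a - 1 / (n + 1 : ℝ) < f x := Set.mem_iInter.1 hx n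
  linarith

end

theorem baire_category_criterion_general {X : Type*} [MetricSpace X]
    (I : X → ℝ)
    (hlsc : LowerSemicontinuous I) (hnonpos : ∀ v, I v ≤ 0)
    (X₀ : Set X) (hdense : Dense X₀)
    (hperturb : ∀ α : ℝ, 0 < α → ∃ β : ℝ, 0 < β ∧
      ∀ v ∈ X₀, I v < -α →
        ∃ w : ℕ → X, (∀ k, w k ∈ X₀) ∧ Tendsto w atTop (𝓝 v) ∧
          I v + β ≤ atTop.liminf (fun k => I (w k))) :
    {v : X | I v = 0} ∈ residual X := by
  have hsuperlevel_dense : ∀ b < 0, Dense {v | b < I v} := fun b hb => by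
    obtain ⟨β, hβ, hβprop⟩ := hperturb (-b / 2) (by linarith)
    refine hlsc.dense_setOf_lt_of_forall_liminf_ge hdense hβ (by linarith : b < b / 2) ?_
    intro v hv hIv
    obtain ⟨w, -, hw, hβw⟩ := hβprop v hv (by linarith)
    exact ⟨w, hw, hβw⟩
  have hzero : {v : X | I v = 0} = {v | 0 ≤ I v} :=
    Set.ext fun v => ⟨ge_of_eq, (hnonpos v).antisymm⟩
  exact hzero ▸ hlsc.setOf_le_mem_residual hsuperlevel_dense

/-- the abstract Baire-category argument: a bounded
lower-semicontinuous nonpositive functional with the perturbation property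
on a dense subset of a complete metric space vanishes on a residual set. -/
theorem baire_category_criterion {X : Type*} [MetricSpace X] [CompleteSpace X]
    (I : X → ℝ) (hbdd : ∃ M : ℝ, ∀ v, |I v| ≤ M)
    (hlsc : LowerSemicontinuous I) (hnonpos : ∀ v, I v ≤ 0)
    (X₀ : Set X) (hdense : Dense X₀)
    (hperturb : ∀ α : ℝ, 0 < α → ∃ β : ℝ, 0 < β ∧
      ∀ v ∈ X₀, I v < -α →
        ∃ w : ℕ → X, (∀ k, w k ∈ X₀) ∧ Tendsto w atTop (𝓝 v) ∧
          I v + β ≤ atTop.liminf (fun k => I (w k))) :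
    {v : X | I v = 0} ∈ residual X :=
  baire_category_criterion_general I hlsc hnonpos X₀ hdense hperturb
end
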